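/- Let L = ⊕_{i≥1} L_i be an ℕ-graded Lie algebra over a field k. Then L is a free Lie algebra if and only if H₂(L,k) = 0. -/

import Mathlib

universe u

/-- An ℕ-grading (by positive degrees) of a Lie algebra `L` over `k`:
`L = ⊕_{i ≥ 1} L_i` with `⁅L_i, L_j⁆ ⊆ L_{i+j}`.  The component of degree `0` is zero. -/
structure LieGrading (k : Type u) [Field k] (L : Type u) [LieRing L] [LieAlgebra k L] where
  G : ℕ → Submodule k L
  zero_eq_bot : G 0 = ⊥
  iSup_eq_top : iSup G = ⊤
  indep : iSupIndep G
  bracket_mem : ∀ i j x y, x ∈ G i → y ∈ G j → ⁅x, y⁆ ∈ G (i + j)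

open FreeLieAlgebra

variable (k : Type u) [Field k]

section HopfH2

variable (A : Type u) [LieRing A] [LieAlgebra k A]

/-- The canonical free presentation `F(A) → A` (the lift of the identity map of the
underlying type of `A`). -/
noncomputable def canPres : FreeLieAlgebra k A →ₗ⁅k⁆ A := FreeLieAlgebra.lift k id

/-- The relation ideal `R` of the canonical free presentation of `A`. -/
noncomputable def canRel : LieIdeal k (FreeLieAlgebra k A) := (canPres k A).ker

/-- `H₂(A,k)` computed by the Hopf formula `(R ∩ [F,F]) / [R,F]` from the canonical free
presentation `A = F/R`, `F = F(A)`. -/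
noncomputable def hopfH2 : Type u :=
  ↥((canRel k A : Submodule k (FreeLieAlgebra k A)) ⊓
      ((⁅(⊤ : LieIdeal k (FreeLieAlgebra k A)), (⊤ : LieIdeal k (FreeLieAlgebra k A))⁆ :
        LieIdeal k (FreeLieAlgebra k A)) : Submodule k (FreeLieAlgebra k A))) ⧸
    (Submodule.comap
      ((canRel k A : Submodule k (FreeLieAlgebra k A)) ⊓
        ((⁅(⊤ : LieIdeal k (FreeLieAlgebra k A)), (⊤ : LieIdeal k (FreeLieAlgebra k A))⁆ :
          LieIdeal k (FreeLieAlgebra k A)) : Submodule k (FreeLieAlgebra k A))).subtype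
      ((⁅canRel k A, (⊤ : LieIdeal k (FreeLieAlgebra k A))⁆ :
        LieIdeal k (FreeLieAlgebra k A)) : Submodule k (FreeLieAlgebra k A)))

noncomputable instance : AddCommGroup (hopfH2 k A) := by unfold hopfH2; infer_instance

noncomputable instance : Module k (hopfH2 k A) := by unfold hopfH2; infer_instance

end HopfH2

/-!
A free Lie algebra has `H₂ = 0`: the Hopf quotient `(R ∩ [F, F]) / [R, F]` does not depend on the
free presentation `F / R`, and an isomorphism `F(X) ≅ L` is a presentation with `R = 0`.

Conversely, choose in each degree `n` a complement `Vₙ` of the span of the brackets of elements of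
lower degrees, and map the free Lie algebra `F` on bases of the `Vₙ` to `L`. By induction on the
degree this map is onto, and its kernel `R` lies in `[F, F]` because the generators stay linearly
independent modulo `[L, L]`. Then `H₂(L) = 0` gives `R ⊆ [R, F]`. As `R` is a graded ideal and `F`
is positively graded, a nonzero element of `R` of least degree cannot be a sum of brackets
`⁅r, f⁆` with `r ∈ R`, as `f` has positive degree (graded Nakayama); so `R = 0`.
-/

namespace DirectSum

variable {ι R M N : Type*} [DecidableEq ι] [Ring R] [AddCommGroup M] [Module R M]
  [AddCommGroup N] [Module R N] {ℳ : ι → Submodule R M}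

theorem decompose_mem_of_mem_iSup [Decomposition ℳ] {D : ι → Submodule R M}
    (hD : ∀ i, D i ≤ ℳ i) {x : M} (hx : x ∈ ⨆ i, D i) (i : ι) :
    (decompose ℳ x i : M) ∈ D i := by
  refine Submodule.iSup_induction D (motive := fun x => (decompose ℳ x i : M) ∈ D i) hx
    (fun j y hy => ?_) (by simp) (fun y z hy hz => by simpa using add_mem hy hz)
  by_cases hji : j = i
  · subst hji
    rwa [decompose_of_mem_same ℳ (hD j hy)]
  · rw [decompose_of_mem_ne ℳ (hD j hy) hji]
    exact zero_mem _

theorem mem_iSup_of_decompose_mem [Decomposition ℳ] {P : ι → Submodule R M} {x : M}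
    (hx : ∀ i, (decompose ℳ x i : M) ∈ P i) : x ∈ ⨆ i, P i := by
  classical
  rw [← sum_support_decompose ℳ x]
  exact Submodule.sum_mem _ fun i _ => Submodule.mem_iSup_of_mem i (hx i)

namespace IsInternal

theorem mem_of_mem_iSup (h : IsInternal ℳ) {D : ι → Submodule R M} (hD : ∀ i, D i ≤ ℳ i)
    {x : M} (hx : x ∈ ⨆ i, D i) {i : ι} (hxi : x ∈ ℳ i) : x ∈ D i := by
  let := h.chooseDecomposition
  simpa only [decompose_of_mem_same ℳ hxi] using decompose_mem_of_mem_iSup hD hx i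

theorem iSup_inf_iSup (h : IsInternal ℳ) {D E : ι → Submodule R M} (hD : ∀ i, D i ≤ ℳ i)
    (hE : ∀ i, E i ≤ ℳ i) : (⨆ i, D i) ⊓ (⨆ i, E i) = ⨆ i, D i ⊓ E i := by
  let := h.chooseDecomposition
  refine le_antisymm (fun x hx => mem_iSup_of_decompose_mem (ℳ := ℳ) fun i => ?_)
    (le_inf (iSup_mono fun _ => inf_le_left) (iSup_mono fun _ => inf_le_right))
  exact ⟨decompose_mem_of_mem_iSup hD hx.1 i, decompose_mem_of_mem_iSup hE hx.2 i⟩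

theorem ker_le_iSup_inf_ker (h : IsInternal ℳ) {𝒩 : ι → Submodule R N} (h𝒩 : iSupIndep 𝒩)
    {f : M →ₗ[R] N} (hf : ∀ i, ℳ i ≤ (𝒩 i).comap f) :
    LinearMap.ker f ≤ ⨆ i, ℳ i ⊓ LinearMap.ker f := by
  classical
  let := h.chooseDecomposition
  intro x hx
  have hsum : ∑ i ∈ (decompose ℳ x).support, f (decompose ℳ x i) = 0 := by
    rw [← map_sum, sum_support_decompose, hx]
  refine mem_iSup_of_decompose_mem fun i => Submodule.mem_inf.mpr ⟨(decompose ℳ x i).2, ?_⟩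
  by_cases hi : i ∈ (decompose ℳ x).support
  · exact (iSupIndep_iff_finsetSum_eq_zero_imp_eq_zero 𝒩).mp h𝒩 _ _
      (fun j _ => hf j (decompose ℳ x j).2) hsum i hi
  · simp [DFinsupp.notMem_support_iff.mp hi]

end IsInternal

end DirectSum

section BracketSpan

variable {ι R L : Type*} [Add ι] [CommRing R] [LieRing L] [LieAlgebra R L]

def bracketSpan (A B : ι → Submodule R L) (n : ι) : Submodule R L :=
  Submodule.span R {m | ∃ i j, i + j = n ∧ ∃ a ∈ A i, ∃ b ∈ B j, ⁅a, b⁆ = m}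

variable {A B : ι → Submodule R L}

theorem bracketSpan_le {n : ι} {P : Submodule R L}
    (h : ∀ i j, i + j = n → ∀ a ∈ A i, ∀ b ∈ B j, ⁅a, b⁆ ∈ P) : bracketSpan A B n ≤ P := by
  rw [bracketSpan, Submodule.span_le]
  rintro _ ⟨i, j, hij, a, ha, b, hb, rfl⟩
  exact h i j hij a ha b hb

theorem bracketSpan_mono {A' B' : ι → Submodule R L} (hA : A ≤ A') (hB : B ≤ B') (n : ι) :
    bracketSpan A B n ≤ bracketSpan A' B' n :=
  Submodule.span_mono fun _ ⟨i, j, hij, a, ha, b, hb, hab⟩ =>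
    ⟨i, j, hij, a, hA i ha, b, hB j hb, hab⟩

theorem lie_mem_iSup_bracketSpan {a b : L} (ha : a ∈ ⨆ i, A i) (hb : b ∈ ⨆ j, B j) :
    ⁅a, b⁆ ∈ ⨆ n, bracketSpan A B n := by
  refine Submodule.iSup_induction A (motive := fun a => ⁅a, b⁆ ∈ _) ha (fun i a ha => ?_)
    (by simp) (fun _ _ h₁ h₂ => by simpa only [add_lie] using add_mem h₁ h₂)
  refine Submodule.iSup_induction B (motive := fun b => ⁅a, b⁆ ∈ _) hb (fun j b hb => ?_)
    (by simp) (fun _ _ h₁ h₂ => by simpa only [lie_add] using add_mem h₁ h₂)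
  exact Submodule.mem_iSup_of_mem (i + j) (Submodule.subset_span ⟨i, j, rfl, a, ha, b, hb, rfl⟩)

theorem lieIdeal_oper_le_iSup_bracketSpan {I J : LieIdeal R L}
    (hI : (I : Submodule R L) ≤ ⨆ i, A i) (hJ : (J : Submodule R L) ≤ ⨆ j, B j) :
    ((⁅I, J⁆ : LieIdeal R L) : Submodule R L) ≤ ⨆ n, bracketSpan A B n := by
  rw [LieIdeal.toLieSubalgebra_toSubmodule, LieSubmodule.lieIdeal_oper_eq_linear_span',
    Submodule.span_le]
  rintro _ ⟨x, hx, y, hy, rfl⟩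
  exact lie_mem_iSup_bracketSpan (hI hx) (hJ hy)

theorem bracketSpan_le_of_lt {A B : ℕ → Submodule R L} (hA : A 0 = ⊥) (hB : B 0 = ⊥) {n : ℕ}
    {P : Submodule R L} (h : ∀ i j, i < n → j < n → ∀ a ∈ A i, ∀ b ∈ B j, ⁅a, b⁆ ∈ P) :
    bracketSpan A B n ≤ P := by
  refine bracketSpan_le fun i j hij a ha b hb => ?_
  rcases Nat.eq_zero_or_pos i with rfl | hi
  · rw [hA, Submodule.mem_bot] at ha
    simp [ha]
  rcases Nat.eq_zero_or_pos j with rfl | hj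
  · rw [hB, Submodule.mem_bot] at hb
    simp [hb]
  exact h i j (by omega) (by omega) a ha b hb

end BracketSpan

namespace LieHom

variable {R F F' L : Type*} [CommRing R] [LieRing F] [LieAlgebra R F] [LieRing F']
  [LieAlgebra R F'] [LieRing L] [LieAlgebra R L]

/-- By the Hopf formula, this says that `H₂` of the target of the presentation `π` vanishes. -/
def HopfQuotientTrivial (π : F →ₗ⁅R⁆ L) : Prop :=
  π.ker ⊓ ⁅(⊤ : LieIdeal R F), ⊤⁆ ≤ ⁅π.ker, (⊤ : LieIdeal R F)⁆

theorem apply_mem_lie_top (f : F →ₗ⁅R⁆ F') {I : LieIdeal R F} {J : LieIdeal R F'}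
    (h : I ≤ J.comap f) {r : F} (hr : r ∈ ⁅I, (⊤ : LieIdeal R F)⁆) :
    f r ∈ ⁅J, (⊤ : LieIdeal R F')⁆ :=
  LieSubmodule.mono_lie (LieIdeal.map_le_iff_le_comap.mpr h) le_top
    (LieIdeal.map_bracket_le f (LieIdeal.mem_map hr))

theorem sub_mem_lie_ker_top {π : F →ₗ⁅R⁆ L} (α : F →ₗ⁅R⁆ F) (hα : π.comp α = π) {r : F}
    (hr : r ∈ ⁅(⊤ : LieIdeal R F), (⊤ : LieIdeal R F)⁆) :
    α r - r ∈ ⁅π.ker, (⊤ : LieIdeal R F)⁆ := by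
  have hker : ∀ x, α x - x ∈ π.ker := fun x => by
    rw [mem_ker, map_sub, ← comp_apply, hα, sub_self]
  have hlie : ∀ x y : F, α ⁅x, y⁆ - ⁅x, y⁆ = ⁅α x - x, α y⁆ - ⁅α y - y, x⁆ := fun x y => by
    rw [map_lie, sub_lie, sub_lie, ← lie_skew (α y) x, ← lie_skew y x]
    abel
  let S : Submodule R F := Submodule.comap ((α : F →ₗ[R] F) - LinearMap.id)
    (⁅π.ker, (⊤ : LieIdeal R F)⁆ : LieIdeal R F)
  suffices ((⁅(⊤ : LieIdeal R F), ⊤⁆ : LieIdeal R F) : Submodule R F) ≤ S from this hr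
  rw [LieIdeal.toLieSubalgebra_toSubmodule, LieSubmodule.lieIdeal_oper_eq_linear_span',
    Submodule.span_le]
  rintro _ ⟨x, -, y, -, rfl⟩
  show α ⁅x, y⁆ - ⁅x, y⁆ ∈ ⁅π.ker, (⊤ : LieIdeal R F)⁆
  rw [hlie]
  exact sub_mem (LieSubmodule.lie_mem_lie (hker x) (LieSubmodule.mem_top (α y)))
    (LieSubmodule.lie_mem_lie (hker y) (LieSubmodule.mem_top x))

theorem HopfQuotientTrivial.of_comp_eq {π : F →ₗ⁅R⁆ L} {π' : F' →ₗ⁅R⁆ L}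
    (h : π.HopfQuotientTrivial) (f : F →ₗ⁅R⁆ F') (hf : π'.comp f = π) (g : F' →ₗ⁅R⁆ F)
    (hg : π.comp g = π') : π'.HopfQuotientTrivial := by
  rintro r ⟨hrR, hrD⟩
  have hgr : g r ∈ π.ker ⊓ ⁅(⊤ : LieIdeal R F), ⊤⁆ :=
    ⟨by simpa [← hg] using hrR, apply_mem_lie_top g le_top hrD⟩
  have hfgr : f (g r) ∈ ⁅π'.ker, (⊤ : LieIdeal R F')⁆ :=
    apply_mem_lie_top f (fun x hx => by simpa [← hf] using hx) (h hgr)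
  have hα : π'.comp (f.comp g) = π' := LieHom.ext fun x => by
    rw [comp_apply, comp_apply, ← comp_apply π' f, hf, ← comp_apply, hg]
  simpa using sub_mem hfgr (sub_mem_lie_ker_top (f.comp g) hα hrD)

theorem hopfQuotientTrivial_of_injective {π : F →ₗ⁅R⁆ L} (hπ : Function.Injective π) :
    π.HopfQuotientTrivial := by
  rw [HopfQuotientTrivial, (ker_eq_bot π).mpr hπ, bot_inf_eq]
  exact bot_le

end LieHom

namespace FreeLieAlgebra

variable {R X F L : Type*} [CommRing R] [LieRing F] [LieAlgebra R F] [LieRing L] [LieAlgebra R L]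

theorem eq_top_of_of_mem (S : LieSubalgebra R (FreeLieAlgebra R X)) (h : ∀ x, of R x ∈ S) :
    S = ⊤ := by
  let τ : FreeLieAlgebra R X →ₗ⁅R⁆ S := lift R fun x => ⟨of R x, h x⟩
  have hτ : S.incl.comp τ = LieHom.id := hom_ext fun x => by simp [τ]
  refine eq_top_iff.mpr fun z _ => ?_
  rw [← show S.incl (τ z) = z from LieHom.congr_fun hτ z]
  exact (τ z).2

theorem iSup_eq_top_of_graded {ι : Type*} [Add ι] {D : ι → Submodule R (FreeLieAlgebra R X)}
    (d : X → ι) (hof : ∀ x, of R x ∈ D (d x))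
    (hlie : ∀ i j, ∀ a ∈ D i, ∀ b ∈ D j, ⁅a, b⁆ ∈ D (i + j)) : ⨆ i, D i = ⊤ := by
  let S : LieSubalgebra R (FreeLieAlgebra R X) :=
    { ⨆ i, D i with
      lie_mem' := fun ha hb => iSup_le (fun n => bracketSpan_le fun i j hij a ha b hb =>
        Submodule.mem_iSup_of_mem n (hij ▸ hlie i j a ha b hb)) (lie_mem_iSup_bracketSpan ha hb) }
  exact congrArg LieSubalgebra.toSubmodule
    (eq_top_of_of_mem S fun x => Submodule.mem_iSup_of_mem (d x) (hof x))

theorem span_range_of_sup_lie_top :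
    Submodule.span R (Set.range (of R : X → FreeLieAlgebra R X)) ⊔
      ((⁅(⊤ : LieIdeal R (FreeLieAlgebra R X)), ⊤⁆ : LieIdeal R (FreeLieAlgebra R X)) :
        Submodule R (FreeLieAlgebra R X)) = ⊤ := by
  let S : LieSubalgebra R (FreeLieAlgebra R X) :=
    { Submodule.span R (Set.range (of R)) ⊔
        ((⁅(⊤ : LieIdeal R (FreeLieAlgebra R X)), ⊤⁆ : LieIdeal R (FreeLieAlgebra R X)) :
          Submodule R (FreeLieAlgebra R X)) with
      lie_mem' := fun _ _ => Submodule.mem_sup_right (LieSubmodule.lie_mem_lie trivial trivial) }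
  exact congrArg LieSubalgebra.toSubmodule
    (eq_top_of_of_mem S fun x => Submodule.mem_sup_left (Submodule.subset_span ⟨x, rfl⟩))

theorem exists_comp_eq {π : F →ₗ⁅R⁆ L} (hπ : Function.Surjective π)
    (ρ : FreeLieAlgebra R X →ₗ⁅R⁆ L) : ∃ f : FreeLieAlgebra R X →ₗ⁅R⁆ F, π.comp f = ρ :=
  ⟨lift R fun x => (hπ (ρ (of R x))).choose,
    hom_ext fun x => by simp [(hπ (ρ (of R x))).choose_spec]⟩

theorem ker_lift_le_lie_top {f : X → L}
    (hf : LinearIndependent R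
      ((((⁅(⊤ : LieIdeal R L), ⊤⁆ : LieIdeal R L) : Submodule R L).mkQ) ∘ f)) :
    (lift R f).ker ≤ ⁅(⊤ : LieIdeal R (FreeLieAlgebra R X)), ⊤⁆ := by
  intro r hr
  obtain ⟨u, hu, c, hc, rfl⟩ := Submodule.mem_sup.mp
    (span_range_of_sup_lie_top (R := R) (X := X) ▸ Submodule.mem_top (x := r))
  obtain ⟨a, rfl⟩ := Finsupp.mem_span_range_iff_exists_finsupp.mp hu
  suffices a = 0 by simpa [this] using hc
  refine linearIndependent_iff.mp hf a ?_
  have hc' : lift R f c ∈ ⁅(⊤ : LieIdeal R L), ⊤⁆ := LieHom.apply_mem_lie_top _ le_top hc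
  have hsum : (a.sum fun x t => t • f x) = -lift R f c := by
    rw [LieHom.mem_ker, map_add] at hr
    simpa [map_finsuppSum] using eq_neg_of_add_eq_zero_left hr
  rw [Finsupp.linearCombination_apply]
  simp only [Function.comp_apply, ← map_smul, ← map_finsuppSum]
  rw [Submodule.mkQ_apply, Submodule.Quotient.mk_eq_zero, hsum]
  exact neg_mem hc'

end FreeLieAlgebra

theorem LieHom.HopfQuotientTrivial.of_surjective {R X Y L : Type*} [CommRing R] [LieRing L]
    [LieAlgebra R L] {π : FreeLieAlgebra R X →ₗ⁅R⁆ L} {π' : FreeLieAlgebra R Y →ₗ⁅R⁆ L}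
    (h : π.HopfQuotientTrivial) (hπ : Function.Surjective π) (hπ' : Function.Surjective π') :
    π'.HopfQuotientTrivial := by
  obtain ⟨f, hf⟩ := FreeLieAlgebra.exists_comp_eq hπ' π
  obtain ⟨g, hg⟩ := FreeLieAlgebra.exists_comp_eq hπ π'
  exact h.of_comp_eq f hf g hg

section CanonicalPresentation

variable (A : Type u) [LieRing A] [LieAlgebra k A]

theorem canPres_surjective : Function.Surjective (canPres k A) :=
  fun a => ⟨of k a, lift_of_apply id a⟩

theorem subsingleton_hopfH2_iff :
    Subsingleton (hopfH2 k A) ↔ (canPres k A).HopfQuotientTrivial := by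
  unfold hopfH2
  rw [Submodule.Quotient.subsingleton_iff, Submodule.comap_subtype_eq_top]
  rfl

end CanonicalPresentation

namespace LieGrading

variable {k} {L : Type u} [LieRing L] [LieAlgebra k L] (gr : LieGrading k L)

theorem isInternal : DirectSum.IsInternal gr.G :=
  DirectSum.isInternal_submodule_of_iSupIndep_of_iSup_eq_top gr.indep gr.iSup_eq_top

theorem bracketSpan_le (n : ℕ) : bracketSpan gr.G gr.G n ≤ gr.G n :=
  _root_.bracketSpan_le fun i j hij a ha b hb => hij ▸ gr.bracket_mem i j a b ha hb

theorem eq_bot_of_le_lie_top {I : LieIdeal k L} (hI : (I : Submodule k L) ≤ ⨆ n, gr.G n ⊓ I)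
    (h : I ≤ ⁅I, ⊤⁆) : I = ⊥ := by
  have hbr : (I : Submodule k L) ≤ ⨆ n, bracketSpan (fun i => gr.G i ⊓ I) gr.G n :=
    ((LieSubmodule.toSubmodule_le_toSubmodule _ _).mpr h).trans
      (lieIdeal_oper_le_iSup_bracketSpan hI (gr.iSup_eq_top ▸ le_top))
  have hdeg : ∀ n, gr.G n ⊓ I = ⊥ := by
    intro n
    induction n using Nat.strong_induction_on with
    | _ n ih =>
      refine eq_bot_iff.mpr fun x hx => ?_
      have hxn := gr.isInternal.mem_of_mem_iSup
        (fun m => (bracketSpan_mono (fun i => inf_le_left) le_rfl m).trans (gr.bracketSpan_le m))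
        (hbr hx.2) hx.1
      refine bracketSpan_le_of_lt (by simp [gr.zero_eq_bot]) gr.zero_eq_bot
        (fun i j hi _ a ha b hb => ?_) hxn
      rw [ih i hi, Submodule.mem_bot] at ha
      simp [ha]
  refine (LieSubmodule.toSubmodule_eq_bot I).mp (eq_bot_iff.mpr ?_)
  exact hI.trans (by simp only [hdeg, iSup_bot, le_refl])

end LieGrading

namespace FreeLieAlgebra

open scoped TensorProduct

variable {X : Type u} (d : X → ℕ)

/-- Recording the degree as the exponent of `t` grades the free Lie algebra without a normal form
for its elements. -/
noncomputable def degreeTensor :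
    FreeLieAlgebra k X →ₗ⁅k⁆ Polynomial k ⊗[k] FreeLieAlgebra k X :=
  lift k fun x => (Polynomial.X ^ d x : Polynomial k) ⊗ₜ of k x

noncomputable def homogeneousSubmodule (n : ℕ) : Submodule k (FreeLieAlgebra k X) :=
  LinearMap.eqLocus (degreeTensor k d).toLinearMap
    (TensorProduct.mk k (Polynomial k) (FreeLieAlgebra k X) (Polynomial.X ^ n))

theorem mem_homogeneousSubmodule {n : ℕ} {z : FreeLieAlgebra k X} :
    z ∈ homogeneousSubmodule k d n ↔
      degreeTensor k d z = (Polynomial.X ^ n : Polynomial k) ⊗ₜ z :=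
  Iff.rfl

theorem of_mem_homogeneousSubmodule (x : X) : of k x ∈ homogeneousSubmodule k d (d x) := by
  rw [mem_homogeneousSubmodule, degreeTensor, lift_of_apply]

theorem lie_mem_homogeneousSubmodule {i j : ℕ} {a b : FreeLieAlgebra k X}
    (ha : a ∈ homogeneousSubmodule k d i) (hb : b ∈ homogeneousSubmodule k d j) :
    ⁅a, b⁆ ∈ homogeneousSubmodule k d (i + j) := by
  rw [mem_homogeneousSubmodule] at ha hb ⊢
  rw [LieHom.map_lie, ha, hb, LieAlgebra.ExtendScalars.bracket_tmul, pow_add]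

theorem iSupIndep_homogeneousSubmodule : iSupIndep (homogeneousSubmodule k d) := by
  classical
  rw [iSupIndep_iff_finsetSum_eq_zero_imp_eq_zero]
  intro s v hv hsum i hi
  let coeff : Polynomial k ⊗[k] FreeLieAlgebra k X →ₗ[k] FreeLieAlgebra k X :=
    TensorProduct.lift ((LinearMap.lsmul k _).comp (Polynomial.lcoeff k i))
  have := congrArg (coeff ∘ degreeTensor k d) hsum
  simp only [Function.comp_apply, map_sum, map_zero] at this
  rw [Finset.sum_congr rfl fun j hj => by rw [(mem_homogeneousSubmodule k d).mp (hv j hj)]]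
    at this
  simpa [coeff, Polynomial.coeff_X_pow, hi] using this

/-- The degree-`0` part is cut off by hand; it is zero anyway when all generators have
positive degree. -/
noncomputable def degreeComponent (n : ℕ) : Submodule k (FreeLieAlgebra k X) :=
  if n = 0 then ⊥ else homogeneousSubmodule k d n

theorem degreeComponent_le (n : ℕ) : degreeComponent k d n ≤ homogeneousSubmodule k d n := by
  unfold degreeComponent
  split_ifs
  exacts [bot_le, le_rfl]

theorem lie_mem_degreeComponent {i j : ℕ} {a b : FreeLieAlgebra k X}
    (ha : a ∈ degreeComponent k d i) (hb : b ∈ degreeComponent k d j) :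
    ⁅a, b⁆ ∈ degreeComponent k d (i + j) := by
  by_cases hij : i + j = 0
  · obtain ⟨rfl, -⟩ := Nat.add_eq_zero_iff.mp hij
    rw [degreeComponent, if_pos rfl, Submodule.mem_bot] at ha
    simp [ha]
  · rw [degreeComponent, if_neg hij]
    exact lie_mem_homogeneousSubmodule k d (degreeComponent_le k d i ha)
      (degreeComponent_le k d j hb)

variable {d}

theorem of_mem_degreeComponent (hd : ∀ x, d x ≠ 0) (x : X) :
    of k x ∈ degreeComponent k d (d x) := by
  rw [degreeComponent, if_neg (hd x)]
  exact of_mem_homogeneousSubmodule k d x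

noncomputable def degreeGrading (hd : ∀ x, d x ≠ 0) : LieGrading k (FreeLieAlgebra k X) where
  G := degreeComponent k d
  zero_eq_bot := if_pos rfl
  iSup_eq_top := iSup_eq_top_of_graded d (of_mem_degreeComponent k hd)
    fun _ _ _ ha _ hb => lie_mem_degreeComponent k d ha hb
  indep := (iSupIndep_homogeneousSubmodule k d).mono (degreeComponent_le k d)
  bracket_mem _ _ _ _ := lie_mem_degreeComponent k d

theorem degreeGrading_le_comap_lift (hd : ∀ x, d x ≠ 0) {L : Type u} [LieRing L]
    [LieAlgebra k L] (gr : LieGrading k L) {f : X → L} (hf : ∀ x, f x ∈ gr.G (d x)) (n : ℕ) :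
    (degreeGrading k hd).G n ≤ (gr.G n).comap (lift k f : FreeLieAlgebra k X →ₗ[k] L) := by
  let D n := (degreeGrading k hd).G n ⊓ (gr.G n).comap (lift k f : FreeLieAlgebra k X →ₗ[k] L)
  have hD : ⨆ n, D n = ⊤ := by
    refine iSup_eq_top_of_graded d (fun x => ⟨of_mem_degreeComponent k hd x, ?_⟩)
      fun i j a ha b hb => ⟨lie_mem_degreeComponent k d ha.1 hb.1, ?_⟩
    · simpa using hf x
    · simpa using gr.bracket_mem i j _ _ ha.2 hb.2
  exact fun z hz => ((degreeGrading k hd).isInternal.mem_of_mem_iSup (D := D)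
    (fun n => inf_le_left) (hD ▸ Submodule.mem_top) hz).2

end FreeLieAlgebra

namespace LieGrading

variable {k} {L : Type u} [LieRing L] [LieAlgebra k L] (gr : LieGrading k L)

theorem lie_top_le_iSup_bracketSpan :
    ((⁅(⊤ : LieIdeal k L), ⊤⁆ : LieIdeal k L) : Submodule k L) ≤
      ⨆ n, bracketSpan gr.G gr.G n :=
  lieIdeal_oper_le_iSup_bracketSpan (gr.iSup_eq_top ▸ le_top) (gr.iSup_eq_top ▸ le_top)

noncomputable def indecomposables (n : ℕ) : Submodule k L :=
  (IsModularLattice.exists_disjoint_and_sup_eq (gr.bracketSpan_le n)).choose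

theorem disjoint_bracketSpan_indecomposables (n : ℕ) :
    Disjoint (bracketSpan gr.G gr.G n) (gr.indecomposables n) :=
  (IsModularLattice.exists_disjoint_and_sup_eq (gr.bracketSpan_le n)).choose_spec.1

theorem bracketSpan_sup_indecomposables (n : ℕ) :
    bracketSpan gr.G gr.G n ⊔ gr.indecomposables n = gr.G n :=
  (IsModularLattice.exists_disjoint_and_sup_eq (gr.bracketSpan_le n)).choose_spec.2

theorem indecomposables_le (n : ℕ) : gr.indecomposables n ≤ gr.G n :=
  gr.bracketSpan_sup_indecomposables n ▸ le_sup_right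

def Generators : Type u := Σ n : ℕ, Module.Basis.ofVectorSpaceIndex k (gr.indecomposables n)

noncomputable def generator (x : gr.Generators) : L :=
  Module.Basis.ofVectorSpace k (gr.indecomposables x.1) x.2

theorem generator_mem (x : gr.Generators) : gr.generator x ∈ gr.indecomposables x.1 :=
  Subtype.prop _

theorem generators_fst_ne_zero (x : gr.Generators) : x.1 ≠ 0 := by
  obtain ⟨n, b⟩ := x
  rintro rfl
  refine (Module.Basis.ofVectorSpace k _).ne_zero b (Subtype.ext ?_)
  have := gr.indecomposables_le 0 (gr.generator_mem ⟨0, b⟩)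
  rwa [gr.zero_eq_bot, Submodule.mem_bot] at this

theorem generator_mk (n : ℕ) : (fun b => gr.generator ⟨n, b⟩) =
    (gr.indecomposables n).subtype ∘ Module.Basis.ofVectorSpace k (gr.indecomposables n) :=
  rfl

theorem span_generator (n : ℕ) :
    Submodule.span k (Set.range fun b => gr.generator ⟨n, b⟩) = gr.indecomposables n := by
  rw [generator_mk, Set.range_comp, Submodule.span_image, Module.Basis.span_eq,
    Submodule.map_subtype_top]

theorem linearIndependent_generator : LinearIndependent k gr.generator := by
  refine linearIndependent_iUnion_finite (f := fun n b => gr.generator ⟨n, b⟩)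
    (fun n => ?_) fun n t _ hnt => ?_
  · rw [generator_mk]
    exact (Module.Basis.ofVectorSpace k _).linearIndependent.map' _ (Submodule.ker_subtype _)
  · rw [span_generator]
    refine (gr.indep n).mono (gr.indecomposables_le n) (iSup₂_le fun m hm => ?_)
    rw [span_generator]
    exact (gr.indecomposables_le m).trans (le_iSup₂_of_le m (ne_of_mem_of_not_mem hm hnt) le_rfl)

theorem disjoint_span_generator_lie_top :
    Disjoint (Submodule.span k (Set.range gr.generator))
      ((⁅(⊤ : LieIdeal k L), ⊤⁆ : LieIdeal k L) : Submodule k L) := by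
  have hgen : Submodule.span k (Set.range gr.generator) ≤ ⨆ n, gr.indecomposables n :=
    Submodule.span_le.mpr (Set.range_subset_iff.mpr fun x =>
      Submodule.mem_iSup_of_mem x.1 (gr.generator_mem x))
  refine (Disjoint.mono gr.lie_top_le_iSup_bracketSpan hgen ?_).symm
  rw [disjoint_iff, gr.isInternal.iSup_inf_iSup gr.bracketSpan_le gr.indecomposables_le]
  simp [disjoint_iff.mp (gr.disjoint_bracketSpan_indecomposables _)]

noncomputable def minimalPresentation : FreeLieAlgebra k gr.Generators →ₗ⁅k⁆ L :=
  lift k gr.generator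

theorem surjective_minimalPresentation : Function.Surjective gr.minimalPresentation := by
  have hG : ∀ n, gr.G n ≤ gr.minimalPresentation.range.toSubmodule := by
    intro n
    induction n using Nat.strong_induction_on with
    | _ n ih =>
      rw [← gr.bracketSpan_sup_indecomposables n]
      refine sup_le (bracketSpan_le_of_lt gr.zero_eq_bot gr.zero_eq_bot fun i j hi hj a ha b hb =>
        gr.minimalPresentation.range.lie_mem (ih i hi ha) (ih j hj hb)) ?_
      rw [← gr.span_generator n, Submodule.span_le]
      rintro _ ⟨b, rfl⟩
      exact ⟨of k ⟨n, b⟩, lift_of_apply _ _⟩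
  intro y
  exact (iSup_le hG) (gr.iSup_eq_top ▸ Submodule.mem_top : y ∈ ⨆ n, gr.G n)

theorem ker_minimalPresentation_le_lie_top :
    gr.minimalPresentation.ker ≤ ⁅(⊤ : LieIdeal k (FreeLieAlgebra k gr.Generators)), ⊤⁆ :=
  FreeLieAlgebra.ker_lift_le_lie_top (gr.linearIndependent_generator.map
    (by rw [Submodule.ker_mkQ]; exact gr.disjoint_span_generator_lie_top))

theorem injective_minimalPresentation (h : (canPres k L).HopfQuotientTrivial) :
    Function.Injective gr.minimalPresentation := by
  let grF := FreeLieAlgebra.degreeGrading k gr.generators_fst_ne_zero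
  have hker : gr.minimalPresentation.ker ≤ ⁅gr.minimalPresentation.ker, ⊤⁆ :=
    (le_inf le_rfl gr.ker_minimalPresentation_le_lie_top).trans
      (h.of_surjective (canPres_surjective k L) gr.surjective_minimalPresentation)
  have hhom : (gr.minimalPresentation.ker : Submodule k _) ≤
      ⨆ n, grF.G n ⊓ gr.minimalPresentation.ker := by
    rw [LieIdeal.toLieSubalgebra_toSubmodule, LieHom.ker_toSubmodule]
    exact grF.isInternal.ker_le_iSup_inf_ker gr.indep
      (FreeLieAlgebra.degreeGrading_le_comap_lift k _ gr fun x =>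
        gr.indecomposables_le x.1 (gr.generator_mem x))
  rw [← LieHom.ker_eq_bot]
  exact grF.eq_bot_of_le_lie_top hhom hker

end LieGrading

theorem gradedLie_free_iff_H2_eq_zero
    (L : Type u) [LieRing L] [LieAlgebra k L] (gr : LieGrading k L) :
    (∃ X : Type u, Nonempty (FreeLieAlgebra k X ≃ₗ⁅k⁆ L)) ↔
      Subsingleton (hopfH2 k L) := by
  rw [subsingleton_hopfH2_iff]
  constructor
  · rintro ⟨X, ⟨e⟩⟩
    exact (LieHom.hopfQuotientTrivial_of_injective e.injective).of_surjective e.surjective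
      (canPres_surjective k L)
  · intro h
    exact ⟨gr.Generators, ⟨LieEquiv.ofBijective gr.minimalPresentation
      ⟨gr.injective_minimalPresentation h, gr.surjective_minimalPresentation⟩⟩⟩
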